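/- Let A be an (α,β)-Frobenius extension of B with trace maps tr₁ and tr₂, and associated Nakayama isomorphisms ψ₁, ψ₂ : C_A(B) → C_A(α(B)). Then there exists an invertible element a ∈ C_A(α(B)) such that ψ₂(c) = a ψ₁(c) a^{-1} for all c ∈ C_A(B). -/

import Mathlib

/-!
By surjectivity and nondegeneracy, `tr₂ = tr₁ (· * u)` for a unit `u` of `A`. Right
`α`-linearity of both traces forces `u` to commute with `α(B)`, and computing `tr₂ (c * x)`
once through `ψ₂` and once through `tr₁` and `ψ₁` gives `ψ₂ c * u = u * ψ₁ c`.
-/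

section

variable {A M : Type*} [Ring A] [AddCommGroup M] {t t₁ t₂ : A →+ M}

theorem eq_of_forall_map_mul_eq (hnd : ∀ a : A, (∀ x, t (x * a) = 0) → a = 0) {a a' : A}
    (h : ∀ x, t (x * a) = t (x * a')) : a = a' :=
  sub_eq_zero.mp (hnd _ fun x => by rw [mul_sub, map_sub, h, sub_self])

theorem mul_eq_one_of_forall_map_eq_map_mul (hnd₁ : ∀ a : A, (∀ x, t₁ (x * a) = 0) → a = 0)
    {a a' : A} (ha : ∀ x, t₂ x = t₁ (x * a)) (ha' : ∀ x, t₁ x = t₂ (x * a')) : a' * a = 1 :=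
  eq_of_forall_map_mul_eq hnd₁ fun x => by rw [mul_one, ← mul_assoc, ← ha, ← ha']

theorem exists_unit_forall_map_eq_map_mul (hnd₁ : ∀ a : A, (∀ x, t₁ (x * a) = 0) → a = 0)
    (hnd₂ : ∀ a : A, (∀ x, t₂ (x * a) = 0) → a = 0)
    (h₁₂ : ∃ a, ∀ x, t₂ x = t₁ (x * a)) (h₂₁ : ∃ a, ∀ x, t₁ x = t₂ (x * a)) :
    ∃ u : Aˣ, ∀ x, t₂ x = t₁ (x * u) := by
  obtain ⟨a, ha⟩ := h₁₂
  obtain ⟨a', ha'⟩ := h₂₁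
  exact ⟨⟨a, a', mul_eq_one_of_forall_map_eq_map_mul hnd₂ ha' ha,
    mul_eq_one_of_forall_map_eq_map_mul hnd₁ ha ha'⟩, ha⟩

theorem commute_of_forall_map_mul_eq (hnd₁ : ∀ a : A, (∀ x, t₁ (x * a) = 0) → a = 0)
    {a y : A} (g : M → M) (ha : ∀ x, t₂ x = t₁ (x * a))
    (hy₁ : ∀ x, t₁ (x * y) = g (t₁ x)) (hy₂ : ∀ x, t₂ (x * y) = g (t₂ x)) : Commute a y :=
  eq_of_forall_map_mul_eq hnd₁ fun x => by
    rw [← mul_assoc, ← mul_assoc, hy₁, ← ha, ← hy₂, ha]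

theorem mul_eq_mul_of_forall_map_mul_eq (hnd₁ : ∀ a : A, (∀ x, t₁ (x * a) = 0) → a = 0)
    {a c p q : A} (ha : ∀ x, t₂ x = t₁ (x * a))
    (hp : ∀ x, t₁ (c * x) = t₁ (x * p)) (hq : ∀ x, t₂ (c * x) = t₂ (x * q)) :
    q * a = a * p :=
  eq_of_forall_map_mul_eq hnd₁ fun x => by
    rw [← mul_assoc, ← mul_assoc, ← ha, ← hq, ha, mul_assoc, hp]

end

theorem nakayama_isomorphisms_conjugate
    {A : Type u} [Ring A] (B : Subring A) (α : A ≃+* A) (β : B ≃+* B)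
    (tr₁ tr₂ : A →+ B)
    (htr₁bimod : ∀ (b b' : B) (x : A), tr₁ ((β b : A) * x * α (b' : A)) = b * tr₁ x * b')
    (htr₁nd : ∀ a : A, (∀ x : A, tr₁ (x * a) = 0) → a = 0)
    (htr₁surj : ∀ f : A →+ B, (∀ (b : B) (x : A), f ((β b : A) * x) = b * f x) →
      ∃ a : A, ∀ x : A, f x = tr₁ (x * a))
    (htr₂bimod : ∀ (b b' : B) (x : A), tr₂ ((β b : A) * x * α (b' : A)) = b * tr₂ x * b')
    (htr₂nd : ∀ a : A, (∀ x : A, tr₂ (x * a) = 0) → a = 0)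
    (htr₂surj : ∀ f : A →+ B, (∀ (b : B) (x : A), f ((β b : A) * x) = b * f x) →
      ∃ a : A, ∀ x : A, f x = tr₂ (x * a))
    (ψ₁ ψ₂ : A → A)
    (hψ₁ : ∀ c : A, (∀ b : B, c * (b : A) = (b : A) * c) →
      ∀ x : A, tr₁ (c * x) = tr₁ (x * ψ₁ c))
    (hψ₂ : ∀ c : A, (∀ b : B, c * (b : A) = (b : A) * c) →
      ∀ x : A, tr₂ (c * x) = tr₂ (x * ψ₂ c)) :
    ∃ a a' : A, a * a' = 1 ∧ a' * a = 1 ∧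
      (∀ b : B, a * α (b : A) = α (b : A) * a) ∧
      ∀ c : A, (∀ b : B, c * (b : A) = (b : A) * c) → ψ₂ c = a * ψ₁ c * a' := by
  obtain ⟨u, hu⟩ := exists_unit_forall_map_eq_map_mul htr₁nd htr₂nd
    (htr₁surj tr₂ fun b x => by simpa using htr₂bimod b 1 x)
    (htr₂surj tr₁ fun b x => by simpa using htr₁bimod b 1 x)
  refine ⟨u, ↑u⁻¹, u.mul_inv, u.inv_mul, fun b => ?_, fun c hc => ?_⟩
  · exact (commute_of_forall_map_mul_eq htr₁nd (· * b) hu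
      (fun x => by simpa using htr₁bimod 1 b x) (fun x => by simpa using htr₂bimod 1 b x)).eq
  · rw [← mul_eq_mul_of_forall_map_mul_eq htr₁nd hu (hψ₁ c hc) (hψ₂ c hc), u.mul_inv_cancel_right]
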